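/- Fix integers n ≥ 3 and k ≥ 1 and κ ∈ ℂ ∖ {0}. Let D = diag(2n, 2(n−1), 0) and let N be the 3×3 complex matrix with rows (−n−k, (n−1)(k² + 2k(n−1) + n(n−2))/n, 0), (1, −n−k+1, k(k+2(n−1))/n), (0, 1, −k). Set K₁ = (2n + 3(k+κ) − 1)/κ, K₂ = −2(2n−1)/κ, L₁ = (1+k+κ)(κ+2(n+k−1))/κ², L₂ = 2(n−1)(2n+κ)/κ², L₃ = −2(2n² + 4kn + 3nκ − 2(n+k+κ))/κ², M₁ = −2k(n−1)(κ+2(n+k−1))/κ³, M₂ = 2k(n−1)(2n+κ)/κ³. Let U ⊆ ℂ ∖ {0, 1} be open and u, v, w : U → ℂ holomorphic. Then the vector-valued function g = (u, v, w) satisfies the linear system κ·g′(z) = (1/z)·D·g(z) + (1/(z−1))·N·g(z) on U if and only if w satisfies on U the Dotsenko–Fateev equation w‴(z) + ((K₁z + K₂(z−1))/(z(z−1)))·w″(z) + ((L₁z² + L₂(z−1)² + L₃z(z−1))/(z²(z−1)²))·w′(z) + ((M₁z + M₂(z−1))/(z²(z−1)²))·w(z) = 0 and moreover v(z) = k·w(z)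 + κ(z−1)·w′(z) and u(z) = (k(n−1)/z)·(2 − ((n−k+2)/n)·z)·w(z) + (κ(z−1)/z)·(2(n−1) + (κ−n+2k+1)·z)·w′(z) + κ²(z−1)²·w″(z) for all z ∈ U. In particular, g ↦ w = g₃ is a linear bijection from the space of holomorphic solutions of the system on U onto the space of holomorphic solutions of the Dotsenko–Fateev equation on U; in particular w = 0 forces g = 0. -/

import Mathlib

noncomputable def dfK₁ (n k : ℕ) (κ : ℂ) : ℂ :=
  (2 * (n : ℂ) + 3 * ((k : ℂ) + κ) - 1) / κ

noncomputable def dfK₂ (n : ℕ) (κ : ℂ) : ℂ :=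
  -(2 * (2 * (n : ℂ) - 1)) / κ

noncomputable def dfL₁ (n k : ℕ) (κ : ℂ) : ℂ :=
  (1 + (k : ℂ) + κ) * (κ + 2 * ((n : ℂ) + (k : ℂ) - 1)) / κ ^ 2

noncomputable def dfL₂ (n : ℕ) (κ : ℂ) : ℂ :=
  2 * ((n : ℂ) - 1) * (2 * (n : ℂ) + κ) / κ ^ 2

noncomputable def dfL₃ (n k : ℕ) (κ : ℂ) : ℂ :=
  -(2 * (2 * (n : ℂ) ^ 2 + 4 * (k : ℂ) * (n : ℂ) + 3 * (n : ℂ) * κ -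
      2 * ((n : ℂ) + (k : ℂ) + κ))) / κ ^ 2

noncomputable def dfM₁ (n k : ℕ) (κ : ℂ) : ℂ :=
  -(2 * (k : ℂ) * ((n : ℂ) - 1) * (κ + 2 * ((n : ℂ) + (k : ℂ) - 1))) / κ ^ 3

noncomputable def dfM₂ (n k : ℕ) (κ : ℂ) : ℂ :=
  2 * (k : ℂ) * ((n : ℂ) - 1) * (2 * (n : ℂ) + κ) / κ ^ 3

/-- The rank-3 Knizhnik–Zamolodchikov system `κ g′ = (D/z + N/(z−1)) g` for
`g = (u, v, w)`. -/
def KZSystem (n k : ℕ) (κ : ℂ) (U : Set ℂ) (u v w : ℂ → ℂ) : Prop :=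
  ∀ z ∈ U,
    κ * deriv u z = (2 * (n : ℂ) / z) * u z +
      ((-(n : ℂ) - (k : ℂ)) * u z +
        (((n : ℂ) - 1) * ((k : ℂ) ^ 2 + 2 * (k : ℂ) * ((n : ℂ) - 1) +
          (n : ℂ) * ((n : ℂ) - 2)) / (n : ℂ)) * v z) / (z - 1) ∧
    κ * deriv v z = (2 * ((n : ℂ) - 1) / z) * v z +
      (u z + (-(n : ℂ) - (k : ℂ) + 1) * v z +
        ((k : ℂ) * ((k : ℂ) + 2 * ((n : ℂ) - 1)) / (n : ℂ)) * w z) / (z - 1) ∧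
    κ * deriv w z = (v z + (-(k : ℂ)) * w z) / (z - 1)

/-- The third-order Dotsenko–Fateev ordinary differential equation. -/
def DFEquation (n k : ℕ) (κ : ℂ) (U : Set ℂ) (w : ℂ → ℂ) : Prop :=
  ∀ z ∈ U,
    deriv (deriv (deriv w)) z +
      ((dfK₁ n k κ * z + dfK₂ n κ * (z - 1)) / (z * (z - 1))) * deriv (deriv w) z +
      ((dfL₁ n k κ * z ^ 2 + dfL₂ n κ * (z - 1) ^ 2 + dfL₃ n k κ * z * (z - 1)) /
          (z ^ 2 * (z - 1) ^ 2)) * deriv w z +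
      ((dfM₁ n k κ * z + dfM₂ n k κ * (z - 1)) / (z ^ 2 * (z - 1) ^ 2)) * w z = 0

/-!
The third row of the system expresses `v` through `w` and `w′`; once `v′` is known, the second
row expresses `u` through `w`, `w′`, `w″`. Substituting both into the first row leaves
`κ³ (z - 1)²` times the Dotsenko–Fateev operator applied to `w`. Because `U` is open, the
pointwise formulas for `u` and `v` also determine `u′` and `v′`, which makes the reduction an
equivalence.
-/

open Set

noncomputable def kzV (k : ℕ) (κ : ℂ) (w : ℂ → ℂ) (z : ℂ) : ℂ :=
  k * w z + κ * (z - 1) * deriv w z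

noncomputable def kzU (n k : ℕ) (κ : ℂ) (w : ℂ → ℂ) (z : ℂ) : ℂ :=
  ((k : ℂ) * ((n : ℂ) - 1) / z) * (2 - (((n : ℂ) - (k : ℂ) + 2) / (n : ℂ)) * z) * w z +
    (κ * (z - 1) / z) * (2 * ((n : ℂ) - 1) + (κ - (n : ℂ) + 2 * (k : ℂ) + 1) * z) *
      deriv w z +
    κ ^ 2 * (z - 1) ^ 2 * deriv (deriv w) z

noncomputable def dfOperator (n k : ℕ) (κ : ℂ) (w : ℂ → ℂ) (z : ℂ) : ℂ :=
  deriv (deriv (deriv w)) z +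
    ((dfK₁ n k κ * z + dfK₂ n κ * (z - 1)) / (z * (z - 1))) * deriv (deriv w) z +
    ((dfL₁ n k κ * z ^ 2 + dfL₂ n κ * (z - 1) ^ 2 + dfL₃ n k κ * z * (z - 1)) /
        (z ^ 2 * (z - 1) ^ 2)) * deriv w z +
    ((dfM₁ n k κ * z + dfM₂ n k κ * (z - 1)) / (z ^ 2 * (z - 1) ^ 2)) * w z

section Pointwise

variable {n k : ℕ} {κ z : ℂ} {w : ℂ → ℂ}

theorem hasDerivAt_kzV (hw : DifferentiableAt ℂ w z) (hw' : DifferentiableAt ℂ (deriv w) z) :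
    HasDerivAt (kzV k κ w) ((k + κ) * deriv w z + κ * (z - 1) * deriv (deriv w) z) z := by
  have h := (hw.hasDerivAt.const_mul (k : ℂ)).add
    ((((hasDerivAt_id' z).sub_const 1).const_mul κ).mul hw'.hasDerivAt)
  exact h.congr_deriv (by ring)

theorem hasDerivAt_kzU (hz : z ≠ 0) (hw : DifferentiableAt ℂ w z)
    (hw' : DifferentiableAt ℂ (deriv w) z) (hw'' : DifferentiableAt ℂ (deriv (deriv w)) z) :
    HasDerivAt (kzU n k κ w)
      (-(2 * k * (n - 1)) / z ^ 2 * w z +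
        ((k * (n - 1) / z) * (2 - ((n - k + 2) / n) * z) +
          κ * ((κ - n + 2 * k + 1) + 2 * (n - 1) / z ^ 2)) * deriv w z +
        ((κ * (z - 1) / z) * (2 * (n - 1) + (κ - n + 2 * k + 1) * z) + 2 * κ ^ 2 * (z - 1)) *
          deriv (deriv w) z +
        κ ^ 2 * (z - 1) ^ 2 * deriv (deriv (deriv w)) z) z := by
  have ha := ((hasDerivAt_const z ((k : ℂ) * (n - 1))).div (hasDerivAt_id' z) hz).mul
    (((hasDerivAt_id' z).const_mul (((n : ℂ) - k + 2) / n)).const_sub 2)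
  have hb := ((((hasDerivAt_id' z).sub_const 1).const_mul κ).div (hasDerivAt_id' z) hz).mul
    (((hasDerivAt_id' z).const_mul (κ - n + 2 * k + 1)).const_add (2 * ((n : ℂ) - 1)))
  have hc := (((hasDerivAt_id' z).sub_const 1).pow 2).const_mul (κ ^ 2)
  refine (((ha.mul hw.hasDerivAt).add (hb.mul hw'.hasDerivAt)).add
    (hc.mul hw''.hasDerivAt)).congr_deriv ?_
  simp only [Pi.div_apply, Pi.mul_apply, Pi.pow_apply]
  field_simp
  ring

theorem kzRow3_iff (hz1 : z - 1 ≠ 0) {V : ℂ} :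
    κ * deriv w z = (V + (-(k : ℂ)) * w z) / (z - 1) ↔ V = kzV k κ w z := by
  rw [eq_div_iff hz1, kzV]
  constructor <;> intro h <;> linear_combination -h

theorem kzRow2_iff (hn : (n : ℂ) ≠ 0) (hz0 : z ≠ 0) (hz1 : z - 1 ≠ 0)
    (hw : DifferentiableAt ℂ w z) (hw' : DifferentiableAt ℂ (deriv w) z) {U : ℂ} :
    κ * deriv (kzV k κ w) z = (2 * ((n : ℂ) - 1) / z) * kzV k κ w z +
      (U + (-(n : ℂ) - (k : ℂ) + 1) * kzV k κ w z +
        ((k : ℂ) * ((k : ℂ) + 2 * ((n : ℂ) - 1)) / (n : ℂ)) * w z) / (z - 1) ↔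
    U = kzU n k κ w z := by
  have key : κ * deriv (kzV k κ w) z = (2 * ((n : ℂ) - 1) / z) * kzV k κ w z +
      (kzU n k κ w z + (-(n : ℂ) - (k : ℂ) + 1) * kzV k κ w z +
        ((k : ℂ) * ((k : ℂ) + 2 * ((n : ℂ) - 1)) / (n : ℂ)) * w z) / (z - 1) := by
    rw [(hasDerivAt_kzV hw hw').deriv, kzU, kzV]
    field_simp
    ring
  rw [key, add_right_inj, div_left_inj' hz1, add_left_inj, add_left_inj, eq_comm]

theorem kzRow1_iff (hn : (n : ℂ) ≠ 0) (hκ : κ ≠ 0) (hz0 : z ≠ 0) (hz1 : z - 1 ≠ 0)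
    (hw : DifferentiableAt ℂ w z) (hw' : DifferentiableAt ℂ (deriv w) z)
    (hw'' : DifferentiableAt ℂ (deriv (deriv w)) z) :
    κ * deriv (kzU n k κ w) z = (2 * (n : ℂ) / z) * kzU n k κ w z +
      ((-(n : ℂ) - (k : ℂ)) * kzU n k κ w z +
        (((n : ℂ) - 1) * ((k : ℂ) ^ 2 + 2 * (k : ℂ) * ((n : ℂ) - 1) +
          (n : ℂ) * ((n : ℂ) - 2)) / (n : ℂ)) * kzV k κ w z) / (z - 1) ↔
    dfOperator n k κ w z = 0 := by
  have key : κ * deriv (kzU n k κ w) z - ((2 * (n : ℂ) / z) * kzU n k κ w z +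
      ((-(n : ℂ) - (k : ℂ)) * kzU n k κ w z +
        (((n : ℂ) - 1) * ((k : ℂ) ^ 2 + 2 * (k : ℂ) * ((n : ℂ) - 1) +
          (n : ℂ) * ((n : ℂ) - 2)) / (n : ℂ)) * kzV k κ w z) / (z - 1)) =
      κ ^ 3 * (z - 1) ^ 2 * dfOperator n k κ w z := by
    rw [(hasDerivAt_kzU hz0 hw hw' hw'').deriv]
    unfold kzU kzV dfOperator dfK₁ dfK₂ dfL₁ dfL₂ dfL₃ dfM₁ dfM₂
    field_simp
    ring
  rw [← sub_eq_zero, key]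
  simp [hκ, hz1]

end Pointwise

theorem eqOn_deriv_zero {U : Set ℂ} {f : ℂ → ℂ} (hU : IsOpen U) (hf : EqOn f 0 U) :
    EqOn (deriv f) 0 U := by
  simpa using hf.deriv hU

section Solutions

variable {n k : ℕ} {κ : ℂ} {U : Set ℂ} {u v w : ℂ → ℂ}

theorem kzSystem_iff_of_eqOn (hU : IsOpen U) (hU0 : (0 : ℂ) ∉ U) (hU1 : (1 : ℂ) ∉ U)
    (hn : (n : ℂ) ≠ 0) (hκ : κ ≠ 0) (hw : AnalyticOnNhd ℂ w U)
    (hv : EqOn v (kzV k κ w) U) (hu : EqOn u (kzU n k κ w) U) :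
    KZSystem n k κ U u v w ↔ DFEquation n k κ U w := by
  refine forall₂_congr fun z hz => ?_
  have hz0 : z ≠ 0 := ne_of_mem_of_not_mem hz hU0
  have hz1 : z - 1 ≠ 0 := sub_ne_zero.2 (ne_of_mem_of_not_mem hz hU1)
  have hw₁ := (hw z hz).differentiableAt
  have hw₂ := (hw.deriv z hz).differentiableAt
  have hw₃ := (hw.deriv.deriv z hz).differentiableAt
  show _ ↔ dfOperator n k κ w z = 0
  rw [hu.deriv hU hz, hv.deriv hU hz, hu hz, hv hz, kzRow1_iff hn hκ hz0 hz1 hw₁ hw₂ hw₃,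
    kzRow2_iff hn hz0 hz1 hw₁ hw₂, kzRow3_iff hz1]
  simp only [and_self, and_true]

theorem eqOn_kzV_kzU_of_kzSystem (hU : IsOpen U) (hU0 : (0 : ℂ) ∉ U) (hU1 : (1 : ℂ) ∉ U)
    (hn : (n : ℂ) ≠ 0) (hw : AnalyticOnNhd ℂ w U) (h : KZSystem n k κ U u v w) :
    EqOn v (kzV k κ w) U ∧ EqOn u (kzU n k κ w) U := by
  have hz0 {z} (hz : z ∈ U) : z ≠ 0 := ne_of_mem_of_not_mem hz hU0
  have hz1 {z} (hz : z ∈ U) : z - 1 ≠ 0 := sub_ne_zero.2 (ne_of_mem_of_not_mem hz hU1)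
  have hv : EqOn v (kzV k κ w) U := fun z hz => (kzRow3_iff (hz1 hz)).1 (h z hz).2.2
  refine ⟨hv, fun z hz => ?_⟩
  have h₂ := (h z hz).2.1
  rw [hv.deriv hU hz, hv hz] at h₂
  exact (kzRow2_iff hn (hz0 hz) (hz1 hz) (hw z hz).differentiableAt
    (hw.deriv z hz).differentiableAt).1 h₂

theorem kzSystem_iff (hU : IsOpen U) (hU0 : (0 : ℂ) ∉ U) (hU1 : (1 : ℂ) ∉ U)
    (hn : (n : ℂ) ≠ 0) (hκ : κ ≠ 0) (hw : AnalyticOnNhd ℂ w U) :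
    KZSystem n k κ U u v w ↔
      DFEquation n k κ U w ∧ ∀ z ∈ U, v z = kzV k κ w z ∧ u z = kzU n k κ w z := by
  refine ⟨fun h => ?_, fun ⟨hdf, hvu⟩ => ?_⟩
  · obtain ⟨hv, hu⟩ := eqOn_kzV_kzU_of_kzSystem hU hU0 hU1 hn hw h
    exact ⟨(kzSystem_iff_of_eqOn hU hU0 hU1 hn hκ hw hv hu).1 h,
      fun z hz => ⟨hv hz, hu hz⟩⟩
  · exact (kzSystem_iff_of_eqOn hU hU0 hU1 hn hκ hw (fun z hz => (hvu z hz).1)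
      (fun z hz => (hvu z hz).2)).2 hdf

end Solutions

theorem kzU_kzV_eq_zero {n k : ℕ} {κ : ℂ} {U : Set ℂ} {w : ℂ → ℂ} (hU : IsOpen U)
    (hw : EqOn w 0 U) {z : ℂ} (hz : z ∈ U) : kzU n k κ w z = 0 ∧ kzV k κ w z = 0 := by
  have hw' := eqOn_deriv_zero hU hw
  have hw'' := eqOn_deriv_zero hU hw'
  simp [kzV, kzU, hw hz, hw' hz, hw'' hz]

theorem kz_reduces_to_dotsenko_fateev_general (n k : ℕ) (hn : 3 ≤ n)
    (κ : ℂ) (hκ : κ ≠ 0)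
    (U : Set ℂ) (hU : IsOpen U) (hU0 : (0 : ℂ) ∉ U) (hU1 : (1 : ℂ) ∉ U)
    (u v w : ℂ → ℂ)
    (hw : DifferentiableOn ℂ w U) :
    (KZSystem n k κ U u v w ↔
      (DFEquation n k κ U w ∧ ∀ z ∈ U,
        v z = (k : ℂ) * w z + κ * (z - 1) * deriv w z ∧
        u z = ((k : ℂ) * ((n : ℂ) - 1) / z) *
              (2 - (((n : ℂ) - (k : ℂ) + 2) / (n : ℂ)) * z) * w z +
            (κ * (z - 1) / z) *
              (2 * ((n : ℂ) - 1) + (κ - (n : ℂ) + 2 * (k : ℂ) + 1) * z) * deriv w z +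
            κ ^ 2 * (z - 1) ^ 2 * deriv (deriv w) z)) ∧
    (KZSystem n k κ U u v w → (∀ z ∈ U, w z = 0) → ∀ z ∈ U, u z = 0 ∧ v z = 0) := by
  have hn0 : (n : ℂ) ≠ 0 := Nat.cast_ne_zero.2 (by omega)
  have hwa : AnalyticOnNhd ℂ w U := hw.analyticOnNhd hU
  refine ⟨kzSystem_iff hU hU0 hU1 hn0 hκ hwa, fun h hw0 z hz => ?_⟩
  obtain ⟨hv, hu⟩ := eqOn_kzV_kzU_of_kzSystem hU hU0 hU1 hn0 hwa h
  rw [hu hz, hv hz]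
  exact kzU_kzV_eq_zero hU hw0 hz

/-- Reduction of the rank-3 Knizhnik–Zamolodchikov system to the scalar Dotsenko–Fateev
equation: `(u, v, w)` solves the system iff `w` solves the Dotsenko–Fateev equation and
`u`, `v` are recovered from `w` by the stated formulas; in particular `w = 0` forces
`u = v = 0`. -/
theorem kz_reduces_to_dotsenko_fateev (n k : ℕ) (hn : 3 ≤ n) (hk : 1 ≤ k)
    (κ : ℂ) (hκ : κ ≠ 0)
    (U : Set ℂ) (hU : IsOpen U) (hU0 : (0 : ℂ) ∉ U) (hU1 : (1 : ℂ) ∉ U)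
    (u v w : ℂ → ℂ) (hu : DifferentiableOn ℂ u U) (hv : DifferentiableOn ℂ v U)
    (hw : DifferentiableOn ℂ w U) :
    (KZSystem n k κ U u v w ↔
      (DFEquation n k κ U w ∧ ∀ z ∈ U,
        v z = (k : ℂ) * w z + κ * (z - 1) * deriv w z ∧
        u z = ((k : ℂ) * ((n : ℂ) - 1) / z) *
              (2 - (((n : ℂ) - (k : ℂ) + 2) / (n : ℂ)) * z) * w z +
            (κ * (z - 1) / z) *
              (2 * ((n : ℂ) - 1) + (κ - (n : ℂ) + 2 * (k : ℂ) + 1) * z) * deriv w z +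
            κ ^ 2 * (z - 1) ^ 2 * deriv (deriv w) z)) ∧
    (KZSystem n k κ U u v w → (∀ z ∈ U, w z = 0) → ∀ z ∈ U, u z = 0 ∧ v z = 0) :=
  kz_reduces_to_dotsenko_fateev_general n k hn κ hκ U hU hU0 hU1 u v w hw
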